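/- arXiv:1708.02080 — 2 statements merged into one kernel-verified Lean document; each statement's English description precedes it below -/
import Mathlib

section
/- Let K be a field, let V be a nonzero K-vector space, and let S be a nilpotent (non-unital) subalgebra of the algebra End_K(V) of all K-linear transformations of V. Then there exists a nonzero vector w ∈ V such that s(w) = 0 for every s ∈ S; equivalently, there exists a 1-dimensional subspace W ⊆ V with S(W) = 0. -/
/-- A subset `S` of a (possibly non-unital) ring is nilpotent if there is `n ≥ 1`
such that every product of `n` elements of `S` is zero. A product of the `n ≥ 1`
elements `a, l.get 0, l.get 1, ...` (with `l.length + 1 = n`) is `l.foldl (· * ·) a`. -/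
def IsNilpotentSet {R : Type*} [NonUnitalRing R] (S : Set R) : Prop :=
  ∃ n : ℕ, 1 ≤ n ∧ ∀ (a : R) (l : List R), a ∈ S → (∀ y ∈ l, y ∈ S) →
    l.length + 1 = n → l.foldl (· * ·) a = 0

/-! The shortest length `m` for which all products of `m` elements of `S` vanish is positive,
since the empty product is `1 ≠ 0`. Some product `p` of `m - 1` elements is therefore nonzero,
while `s * p` is a product of `m` elements, hence zero, for every `s ∈ S`. In `End_K(V)` any
nonzero value `p v` of `p` is then annihilated by `S`. -/

theorem List.foldl_mul_eq_prod_cons {M : Type*} [Monoid M] (a : M) (l : List M) :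
    l.foldl (· * ·) a = (a :: l).prod := by
  rw [List.prod_eq_foldl, List.foldl_cons, one_mul]

section

variable {R : Type*} [Ring R]

theorem isNilpotentSet_iff_exists_prod_eq_zero {S : Set R} :
    IsNilpotentSet S ↔
      ∃ n, 1 ≤ n ∧ ∀ l : List R, (∀ x ∈ l, x ∈ S) → l.length = n → l.prod = 0 := by
  refine exists_congr fun n => and_congr_right fun hn =>
    ⟨fun h l hlS hlen => ?_, fun h a l ha hlS hlen => ?_⟩
  · obtain _ | ⟨a, l⟩ := l
    · simp only [List.length_nil] at hlen
      omega
    · rw [← List.foldl_mul_eq_prod_cons]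
      exact h a l (hlS a (by simp)) (fun y hy => hlS y (by simp [hy])) (by simpa using hlen)
  · rw [List.foldl_mul_eq_prod_cons]
    exact h (a :: l) (by simpa [ha]) (by simpa using hlen)

theorem IsNilpotentSet.exists_ne_zero_forall_mul_eq_zero [Nontrivial R] {S : Set R}
    (hS : IsNilpotentSet S) : ∃ p : R, p ≠ 0 ∧ ∀ s ∈ S, s * p = 0 := by
  classical
  have hvanish : ∃ n, ∀ l : List R, (∀ x ∈ l, x ∈ S) → l.length = n → l.prod = 0 := by
    obtain ⟨n, -, hn⟩ := isNilpotentSet_iff_exists_prod_eq_zero.mp hS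
    exact ⟨n, hn⟩
  obtain ⟨k, hk⟩ : ∃ k, Nat.find hvanish = k + 1 := Nat.exists_eq_succ_of_ne_zero fun h0 =>
    one_ne_zero (Nat.find_spec hvanish [] (by simp) (by simp [h0]))
  obtain ⟨l, hlS, hlen, hl⟩ : ∃ l : List R, (∀ x ∈ l, x ∈ S) ∧ l.length = k ∧ l.prod ≠ 0 := by
    simpa using Nat.find_min hvanish (show k < Nat.find hvanish by omega)
  refine ⟨l.prod, hl, fun s hs => ?_⟩
  rw [← List.prod_cons]
  exact Nat.find_spec hvanish (s :: l) (by simpa [hs]) (by simp [hlen, hk])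

end

/-- Let `K` be a field, `V` a nonzero `K`-vector space and `S` a nilpotent
(non-unital) subalgebra of `End_K(V)`. Then there exists a nonzero vector `w` with
`s w = 0` for all `s ∈ S` (equivalently, a one-dimensional subspace annihilated by `S`). -/
theorem exists_nonzero_vector_annihilated_of_nilpotent_subalgebra
    {K V : Type*} [Field K] [AddCommGroup V] [Module K V] [Nontrivial V]
    (S : NonUnitalSubalgebra K (Module.End K V))
    (hS : IsNilpotentSet (S : Set (Module.End K V))) :
    ∃ w : V, w ≠ 0 ∧ ∀ s ∈ S, s w = 0 := by
  obtain ⟨p, hp, hSp⟩ := hS.exists_ne_zero_forall_mul_eq_zero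
  obtain ⟨v, hv⟩ := DFunLike.ne_iff.mp hp
  exact ⟨p v, hv, fun s hs => LinearMap.congr_fun (hSp s hs) v⟩
end

section
/- Let K be a field, let V be a nonzero K-vector space, and let s ∈ End_K(V) be a nilpotent linear transformation (s^m = 0 for some m ≥ 1). Then s is strictly triangularizable: there exist a well-ordered index set I and a basis (b_i)_{i ∈ I} of V such that for every i ∈ I, s(b_i) lies in the linear span of {b_j : j < i}. -/
/-!
The kernels `ker (s ^ k)` form an exhaustive filtration `0 = W 0 ≤ W 1 ≤ ⋯` of `V`, and `s` maps
`W (k + 1)` into `W k`. Extending a basis of each `W k` to one of `W (k + 1)` yields a basis of `V`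
in which each vector has a level `ℓ`, the least `k` with the vector in `W (k + 1)`, and `s` sends
it into the span of the vectors of strictly smaller level. Any well-order refining the level then
makes `s` strictly upper triangular.
-/

universe u v

open Submodule

section AdaptedBasis

variable {K : Type*} {V : Type v} [DivisionRing K] [AddCommGroup V] [Module K V]
  {W : ℕ → Submodule K V}

noncomputable def adaptedBasisSet (hW : Monotone W) (h0 : W 0 = ⊥) :
    (k : ℕ) → {c : Set V // LinearIndepOn K id c ∧ span K c = W k}
  | 0 => ⟨∅, linearIndepOn_empty K id, by rw [span_empty, h0]⟩
  | k + 1 =>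
    have hsub : (adaptedBasisSet hW h0 k).1 ⊆ W (k + 1) := fun _ hx =>
      hW k.le_succ <| (adaptedBasisSet hW h0 k).2.2 ▸ subset_span hx
    ⟨_, (adaptedBasisSet hW h0 k).2.1.linearIndepOn_extend hsub, by
      rw [LinearIndepOn.span_extend_eq_span, span_eq]⟩

theorem monotone_adaptedBasisSet (hW : Monotone W) (h0 : W 0 = ⊥) :
    Monotone fun k => (adaptedBasisSet hW h0 k).1 :=
  monotone_nat_of_le_succ fun k => by
    simp only [adaptedBasisSet]
    exact LinearIndepOn.subset_extend _ _

theorem exists_basis_span_image_level_lt_eq (hW : Monotone W) (h0 : W 0 = ⊥)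
    (htop : ⨆ k, W k = ⊤) :
    ∃ (I : Type v) (b : Module.Basis I K V) (ℓ : I → ℕ),
      ∀ k, span K (b '' {i | ℓ i < k}) = W k := by
  classical
  set C := fun k => (adaptedBasisSet hW h0 k).1
  have hC : Monotone C := monotone_adaptedBasisSet hW h0
  have hli : LinearIndepOn K id (⋃ k, C k) :=
    linearIndepOn_iUnion_of_directed hC.directed_le fun k => (adaptedBasisSet hW h0 k).2.1
  have hspan : span K (⋃ k, C k) = ⊤ := by
    simp only [span_iUnion, C, (adaptedBasisSet hW h0 _).2.2, htop]
  let b := Module.Basis.mk hli (by simp only [id_eq, Subtype.range_coe]; exact hspan.ge)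
  have hb : ∀ i, b i = i := Module.Basis.mk_apply _ _
  have hlevel : ∀ i : ⋃ k, C k, ∃ k, (i : V) ∈ C (k + 1) := fun i =>
    (Set.mem_iUnion.1 i.2).imp fun k hk => hC k.le_succ hk
  refine ⟨_, b, fun i => Nat.find (hlevel i), fun k => ?_⟩
  suffices b '' {i | Nat.find (hlevel i) < k} = C k by rw [this, (adaptedBasisSet hW h0 k).2.2]
  ext x
  constructor
  · rintro ⟨i, hi, rfl⟩
    exact hb i ▸ hC hi (Nat.find_spec (hlevel i))
  · intro hx
    obtain ⟨k, rfl⟩ : ∃ k', k = k' + 1 := Nat.exists_eq_succ_of_ne_zero <| by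
      rintro rfl
      exact hx
    exact ⟨⟨x, Set.mem_iUnion_of_mem _ hx⟩, Nat.lt_succ_of_le (Nat.find_min' _ hx), hb _⟩

end AdaptedBasis

theorem exists_isWellOrder_refining_rank {I α : Type*} [LinearOrder α] [WellFoundedLT α]
    (ℓ : I → α) : ∃ r : I → I → Prop, IsWellOrder I r ∧ ∀ i j, ℓ i < ℓ j → r i j :=
  let f : I ↪ α × I := ⟨fun i => (ℓ i, i), fun _ _ h => congrArg Prod.snd h⟩
  ⟨_, (RelEmbedding.preimage f (Prod.Lex (· < ·) WellOrderingRel)).isWellOrder,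
    fun _ _ h => Prod.Lex.left _ _ h⟩

section KernelPowers

variable {R M : Type*} [Semiring R] [AddCommMonoid M] [Module R M] (s : Module.End R M)

theorem Module.End.monotone_ker_pow : Monotone fun k => LinearMap.ker (s ^ k) :=
  monotone_nat_of_le_succ fun k => by
    rw [pow_succ', Module.End.mul_eq_comp]
    exact LinearMap.ker_le_ker_comp _ _

theorem Module.End.mapsTo_ker_pow_succ (k : ℕ) :
    Set.MapsTo s (LinearMap.ker (s ^ (k + 1))) (LinearMap.ker (s ^ k)) := fun x hx => by
  rwa [SetLike.mem_coe, LinearMap.mem_ker, ← Module.End.mul_apply, ← pow_succ]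

end KernelPowers

theorem nilpotent_endomorphism_strictly_triangularizable_general
    {K : Type u} {V : Type v} [Field K] [AddCommGroup V] [Module K V]
    (s : Module.End K V) (hs : ∃ m : ℕ, 1 ≤ m ∧ s ^ m = 0) :
    ∃ (I : Type v) (r : I → I → Prop) (_ : IsWellOrder I r) (b : Module.Basis I K V),
      ∀ i : I, s (b i) ∈ Submodule.span K (b '' {j : I | r j i}) := by
  obtain ⟨m, -, hm⟩ := hs
  have h0 : LinearMap.ker (s ^ 0) = ⊥ := by
    rw [pow_zero, Module.End.one_eq_id, LinearMap.ker_id]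
  have htop : ⨆ k, LinearMap.ker (s ^ k) = ⊤ :=
    eq_top_iff.2 <| le_iSup_of_le m (by rw [hm, LinearMap.ker_zero])
  obtain ⟨I, b, ℓ, hb⟩ := exists_basis_span_image_level_lt_eq s.monotone_ker_pow h0 htop
  obtain ⟨r, hr, hℓr⟩ := exists_isWellOrder_refining_rank ℓ
  refine ⟨I, r, hr, b, fun i =>
    span_mono (Set.image_mono (s := {j | ℓ j < ℓ i}) fun j hj => hℓr j i hj) ?_⟩
  rw [hb]
  exact s.mapsTo_ker_pow_succ (ℓ i) (hb _ ▸ subset_span ⟨i, (ℓ i).lt_succ_self, rfl⟩)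

/-- Let `K` be a field, `V` a nonzero `K`-vector space, and `s` a nilpotent linear
transformation of `V`. Then `s` is strictly triangularizable: there exist a
well-ordered index set `I` and a basis `b : I → V` of `V` such that for every `i`,
`s (b i)` lies in the span of the basis vectors `b j` with `j < i`. -/
theorem nilpotent_endomorphism_strictly_triangularizable
    {K : Type u} {V : Type v} [Field K] [AddCommGroup V] [Module K V] [Nontrivial V]
    (s : Module.End K V) (hs : ∃ m : ℕ, 1 ≤ m ∧ s ^ m = 0) :
    ∃ (I : Type v) (r : I → I → Prop) (_ : IsWellOrder I r) (b : Module.Basis I K V),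
      ∀ i : I, s (b i) ∈ Submodule.span K (b '' {j : I | r j i}) :=
  nilpotent_endomorphism_strictly_triangularizable_general s hs
end
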